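/- In the setting of the cotensor construction from a pre-torsor datum (categories A, B with equalizers; equalizer-preserving functors P, Q, R, S with r, s, w, z, τ satisfying conditions (i)–(iii)), the functor Q̄ defined as the equalizer of (θ^l P) ∘ (Pi) and (θ^r P) ∘ (Pi) : PC → SPQP is naturally isomorphic to the functor Q̄' defined as the equalizer of (Pω^l) ∘ (jP) and (Pω^r) ∘ (jP) : DP → PQPR, and Q̄ carries the structure of a D-C bicomodule functor, with C-coaction c̄ determined by (qC) ∘ c̄ = (PΔ^C) ∘ q and D-coaction d̄ determined by (Dq') ∘ d̄ = (Δ^D P) ∘ q', where q : Q̄ → PC and q' : Q̄' → DP are the equalizer inclusions. -/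

import Mathlib

/-!
`Q̄` and `Q̄'` are both the joint equalizer, inside `P Q P`, of the pair `P ω^l, P ω^r` (whose
equalizer is `P C`, as `P` preserves equalizers) and the pair `θ^l P, θ^r P` (whose equalizer is
`D P`); equalizing two pairs one after the other gives the same subobject in either order, whence
`Q̄' ≅ Q̄`. Being an equalizer of equalizer-preserving functors, `D` preserves equalizers, so
`Q̄ ↪ D P` stays an equalizer after applying `D`. The coactions are the lifts of `P Δ^C` and
`Δ^D P`, and inherit their laws from the comonad laws of `C` and `D`, which in turn come from the
coassociativity of `τ`. Seen inside `P Q P`, both coactions are `P τ`, so they commute, again by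
the coassociativity of `τ`.
-/

open CategoryTheory CategoryTheory.Limits

section Equalizers

variable {𝒞 : Type*} [Category 𝒞]

theorem mono_map_of_isLimit_fork {𝒟 : Type*} [Category 𝒟] (F : 𝒞 ⥤ 𝒟)
    [PreservesLimitsOfShape WalkingParallelPair F] {X Y Z : 𝒞} {f g : Y ⟶ Z} {ι : X ⟶ Y}
    {w : ι ≫ f = ι ≫ g} (h : IsLimit (Fork.ofι ι w)) : Mono (F.map ι) :=
  Fork.IsLimit.mono (isLimitForkMapOfIsLimit F w h)

theorem exists_hom_comp_eq_of_isLimit_iterated_forks {Y Z₁ Z₂ E₁ E₂ K₁ K₂ : 𝒞}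
    {f₁ g₁ : Y ⟶ Z₁} {f₂ g₂ : Y ⟶ Z₂}
    {e₁ : E₁ ⟶ Y} {w₁ : e₁ ≫ f₁ = e₁ ≫ g₁} (h₁ : IsLimit (Fork.ofι e₁ w₁))
    {e₂ : E₂ ⟶ Y} (w₂ : e₂ ≫ f₂ = e₂ ≫ g₂)
    {k₁ : K₁ ⟶ E₁} {v₁ : k₁ ≫ e₁ ≫ f₂ = k₁ ≫ e₁ ≫ g₂} (hk₁ : IsLimit (Fork.ofι k₁ v₁))
    {k₂ : K₂ ⟶ E₂} (v₂ : k₂ ≫ e₂ ≫ f₁ = k₂ ≫ e₂ ≫ g₁) :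
    ∃ b : K₂ ⟶ K₁, b ≫ k₁ ≫ e₁ = k₂ ≫ e₂ := by
  obtain ⟨a, ha : a ≫ e₁ = k₂ ≫ e₂⟩ := Fork.IsLimit.lift' h₁ (k₂ ≫ e₂) (by simpa using v₂)
  obtain ⟨b, hb : b ≫ k₁ = a⟩ := Fork.IsLimit.lift' hk₁ a (by simp [reassoc_of% ha, w₂])
  exact ⟨b, by rw [reassoc_of% hb, ha]⟩

noncomputable def isLimitForkIsoComp {P P' X Y : 𝒞} {f g : X ⟶ Y} {ι : P ⟶ X}
    {w : ι ≫ f = ι ≫ g} (h : IsLimit (Fork.ofι ι w)) (e : P' ≅ P) :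
    IsLimit (Fork.ofι (e.hom ≫ ι) (by rw [Category.assoc, Category.assoc, w]) : Fork f g) :=
  h.ofIsoLimit (Fork.ext e.symm (by simp))

theorem exists_iso_of_isLimit_iterated_forks {Y Z₁ Z₂ E₁ E₂ K₁ K₂ : 𝒞}
    {f₁ g₁ : Y ⟶ Z₁} {f₂ g₂ : Y ⟶ Z₂}
    {e₁ : E₁ ⟶ Y} {w₁ : e₁ ≫ f₁ = e₁ ≫ g₁} (h₁ : IsLimit (Fork.ofι e₁ w₁))
    {e₂ : E₂ ⟶ Y} {w₂ : e₂ ≫ f₂ = e₂ ≫ g₂} (h₂ : IsLimit (Fork.ofι e₂ w₂))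
    {k₁ : K₁ ⟶ E₁} {v₁ : k₁ ≫ e₁ ≫ f₂ = k₁ ≫ e₁ ≫ g₂} (hk₁ : IsLimit (Fork.ofι k₁ v₁))
    {k₂ : K₂ ⟶ E₂} {v₂ : k₂ ≫ e₂ ≫ f₁ = k₂ ≫ e₂ ≫ g₁} (hk₂ : IsLimit (Fork.ofι k₂ v₂)) :
    ∃ ν : K₂ ≅ K₁, ν.hom ≫ k₁ ≫ e₁ = k₂ ≫ e₂ := by
  obtain ⟨b, hb⟩ := exists_hom_comp_eq_of_isLimit_iterated_forks h₁ w₂ hk₁ v₂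
  obtain ⟨b', hb'⟩ := exists_hom_comp_eq_of_isLimit_iterated_forks h₂ w₁ hk₂ v₁
  have : Mono e₁ := Fork.IsLimit.mono h₁
  have : Mono e₂ := Fork.IsLimit.mono h₂
  have : Mono k₁ := Fork.IsLimit.mono hk₁
  have : Mono k₂ := Fork.IsLimit.mono hk₂
  refine ⟨⟨b, b', ?_, ?_⟩, hb⟩
  · rw [← cancel_mono (k₂ ≫ e₂), Category.assoc, hb', hb, Category.id_comp]
  · rw [← cancel_mono (k₁ ≫ e₁), Category.assoc, hb, hb', Category.id_comp]

end Equalizers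

section FunctorCategory

variable {𝒜 ℬ : Type*} [Category 𝒜] [Category ℬ] [HasEqualizers ℬ] {F G E : 𝒜 ⥤ ℬ}
  {l r : F ⟶ G} {ι : E ⟶ F} {w : ι ≫ l = ι ≫ r}

noncomputable def isLimitForkApp (h : IsLimit (Fork.ofι ι w)) (X : 𝒜) :
    IsLimit (Fork.ofι (ι.app X) (NatTrans.congr_app w X)) :=
  isLimitForkMapOfIsLimit ((evaluation 𝒜 ℬ).obj X) w h

variable [PreservesLimitsOfShape WalkingParallelPair F]
  [PreservesLimitsOfShape WalkingParallelPair G]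

noncomputable def isLimitForkMapOfIsLimitOfIsEqualizer (hι : IsLimit (Fork.ofι ι w))
    {X Y Z : 𝒜} {f g : Y ⟶ Z} {e : X ⟶ Y} {we : e ≫ f = e ≫ g} (he : IsLimit (Fork.ofι e we)) :
    IsLimit (Fork.ofι (E.map e) (by simp only [← E.map_comp, we]) : Fork (E.map f) (E.map g)) := by
  have hF := isLimitForkMapOfIsLimit F we he
  have : Mono (G.map e) := mono_map_of_isLimit_fork G he
  have : Mono (ι.app Y) := Fork.IsLimit.mono (isLimitForkApp hι Y)
  have : Mono (ι.app X) := Fork.IsLimit.mono (isLimitForkApp hι X)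
  have : Mono (F.map e) := Fork.IsLimit.mono hF
  refine Fork.IsLimit.mk' _ fun s => ?_
  obtain ⟨u, hu : u ≫ F.map e = s.ι ≫ ι.app Y⟩ := Fork.IsLimit.lift' hF (s.ι ≫ ι.app Y) (by
    rw [Category.assoc, Category.assoc, ← ι.naturality, ← ι.naturality, reassoc_of% s.condition])
  have hul : u ≫ l.app X = u ≫ r.app X := by
    rw [← cancel_mono (G.map e), Category.assoc, Category.assoc, ← l.naturality, ← r.naturality,
      reassoc_of% hu, reassoc_of% hu, ← NatTrans.comp_app, w, NatTrans.comp_app]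
  obtain ⟨v, hv : v ≫ ι.app X = u⟩ := Fork.IsLimit.lift' (isLimitForkApp hι X) u hul
  refine ⟨v, ?_, fun {m} hm => ?_⟩
  · rw [Fork.ι_ofι, ← cancel_mono (ι.app Y), Category.assoc, ι.naturality, reassoc_of% hv, hu]
  · rw [Fork.ι_ofι] at hm
    rw [← cancel_mono (ι.app X ≫ F.map e), reassoc_of% hv, hu, ← ι.naturality, reassoc_of% hm]

theorem preservesEqualizers_of_isLimit_fork (hι : IsLimit (Fork.ofι ι w)) [HasEqualizers 𝒜] :
    PreservesLimitsOfShape WalkingParallelPair E where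
  preservesLimit {K} := by
    have (X Y : 𝒜) (f g : X ⟶ Y) : PreservesLimit (parallelPair f g) E :=
      preservesLimit_of_preserves_limit_cone (equalizerIsEqualizer f g)
        ((isLimitMapConeForkEquiv E _).symm
          (isLimitForkMapOfIsLimitOfIsEqualizer hι (equalizerIsEqualizer f g)))
    exact preservesLimit_of_iso_diagram E (diagramIsoParallelPair K).symm

end FunctorCategory

section Comonads

variable {𝒜 : Type*} [Category 𝒜]

theorem comul_comp_app_comp_map {G K : 𝒜 ⥤ 𝒜} {Δ : G ⟶ G ⋙ G} {i : K ⟶ G} {δ : K ⟶ K ⋙ K}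
    (hδ : ∀ X, δ.app X ≫ K.map (i.app X) ≫ i.app (G.obj X) = i.app X ≫ Δ.app X) (X : 𝒜) :
    δ.app X ≫ i.app (K.obj X) ≫ G.map (i.app X) = i.app X ≫ Δ.app X := by
  rw [← i.naturality]; exact hδ X

theorem coassoc_of_comul_restrict {G K : 𝒜 ⥤ 𝒜} {Δ : G ⟶ G ⋙ G}
    (hΔ : ∀ X, Δ.app X ≫ G.map (Δ.app X) = Δ.app X ≫ Δ.app (G.obj X))
    {i : K ⟶ G} (hi : ∀ X, Mono (i.app X)) (hGi : ∀ X, Mono (G.map (i.app X)))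
    (hGGi : ∀ X, Mono (G.map (G.map (i.app X))))
    {δ : K ⟶ K ⋙ K} (hδ : ∀ X, δ.app X ≫ K.map (i.app X) ≫ i.app (G.obj X) = i.app X ≫ Δ.app X)
    (X : 𝒜) : δ.app X ≫ K.map (δ.app X) = δ.app X ≫ δ.app (K.obj X) := by
  have hδ' := comul_comp_app_comp_map hδ
  have hiδ : K.map (δ.app X) ≫ i.app (K.obj (K.obj X)) = i.app (K.obj X) ≫ G.map (δ.app X) :=
    i.naturality _
  have hΔi : Δ.app (K.obj X) ≫ G.map (G.map (i.app X)) = G.map (i.app X) ≫ Δ.app (G.obj X) :=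
    (Δ.naturality _).symm
  have := hi (K.obj (K.obj X)); have := hGi (K.obj X); have := hGGi X
  rw [← cancel_mono (i.app (K.obj (K.obj X)) ≫ G.map (i.app (K.obj X)) ≫ G.map (G.map (i.app X)))]
  calc (δ.app X ≫ K.map (δ.app X)) ≫ i.app (K.obj (K.obj X)) ≫ G.map (i.app _) ≫
        G.map (G.map (i.app X))
      _ = δ.app X ≫ i.app _ ≫ G.map (δ.app X ≫ i.app (K.obj X) ≫ G.map (i.app X)) := by
        simp only [Category.assoc, reassoc_of% hiδ, Functor.map_comp]
      _ = i.app X ≫ Δ.app X ≫ G.map (Δ.app X) := by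
        rw [hδ', Functor.map_comp, reassoc_of% (hδ' X)]
      _ = i.app X ≫ Δ.app X ≫ Δ.app (G.obj X) := by rw [hΔ]
      _ = (δ.app X ≫ δ.app (K.obj X)) ≫ i.app _ ≫ G.map (i.app _) ≫ G.map (G.map (i.app X)) := by
        rw [Category.assoc, reassoc_of% (hδ' (K.obj X)), hΔi, reassoc_of% (hδ' X)]

end Comonads

section Comodules

variable {𝒜 ℬ : Type*} [Category 𝒜] [Category ℬ] [HasEqualizers ℬ] {F T M : 𝒜 ⥤ ℬ}

theorem exists_rightCoaction_of_isLimit {K : 𝒜 ⥤ 𝒜} {δ : K ⟶ K ⋙ K} {ε : K ⟶ 𝟭 𝒜}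
    (hcoassoc : ∀ X, δ.app X ≫ K.map (δ.app X) = δ.app X ≫ δ.app (K.obj X))
    (hcounit : ∀ X, δ.app X ≫ K.map (ε.app X) = 𝟙 (K.obj X))
    {φl φr : K ⋙ F ⟶ T} {q : M ⟶ K ⋙ F} {wq : q ≫ φl = q ≫ φr} (hq : IsLimit (Fork.ofι q wq))
    (hδ : ∀ X, q.app X ≫ F.map (δ.app X) ≫ φl.app (K.obj X) =
      q.app X ≫ F.map (δ.app X) ≫ φr.app (K.obj X)) :
    ∃ c : M ⟶ K ⋙ M, (∀ X, c.app X ≫ q.app (K.obj X) = q.app X ≫ F.map (δ.app X)) ∧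
      (∀ X, c.app X ≫ M.map (δ.app X) = c.app X ≫ c.app (K.obj X)) ∧
      (∀ X, c.app X ≫ M.map (ε.app X) = 𝟙 (M.obj X)) := by
  obtain ⟨(c : M ⟶ K ⋙ M), hc : c ≫ Functor.whiskerLeft K q = q ≫ Functor.whiskerRight δ F⟩ :=
    Fork.IsLimit.lift' (isLimitForkMapOfIsLimit ((Functor.whiskeringLeft 𝒜 𝒜 ℬ).obj K) wq hq)
      (q ≫ Functor.whiskerRight δ F) (by ext X; simpa using hδ X)
  have hcX (X : 𝒜) : c.app X ≫ q.app (K.obj X) = q.app X ≫ F.map (δ.app X) :=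
    NatTrans.congr_app hc X
  have (X : 𝒜) : Mono (q.app X) := Fork.IsLimit.mono (isLimitForkApp hq X)
  have hqδ (X : 𝒜) : M.map (δ.app X) ≫ q.app (K.obj (K.obj X)) =
      q.app (K.obj X) ≫ F.map (K.map (δ.app X)) := q.naturality _
  have hqε (X : 𝒜) : M.map (ε.app X) ≫ q.app X = q.app (K.obj X) ≫ F.map (K.map (ε.app X)) :=
    q.naturality _
  refine ⟨c, hcX, fun X => ?_, fun X => ?_⟩
  · rw [← cancel_mono (q.app (K.obj (K.obj X))), Category.assoc, Category.assoc, hqδ,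
      reassoc_of% (hcX X), hcX, reassoc_of% (hcX X), ← F.map_comp, ← F.map_comp, hcoassoc]
  · rw [← cancel_mono (q.app X), Category.assoc, hqε, reassoc_of% (hcX X), ← F.map_comp,
      hcounit, F.map_id, Category.comp_id, Category.id_comp]

theorem exists_leftCoaction_of_isLimit {D : ℬ ⥤ ℬ} [PreservesLimitsOfShape WalkingParallelPair D]
    {δ : D ⟶ D ⋙ D} {ε : D ⟶ 𝟭 ℬ}
    (hcoassoc : ∀ Y, δ.app Y ≫ D.map (δ.app Y) = δ.app Y ≫ δ.app (D.obj Y))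
    (hcounit : ∀ Y, δ.app Y ≫ ε.app (D.obj Y) = 𝟙 (D.obj Y))
    {ψl ψr : F ⋙ D ⟶ T} {q : M ⟶ F ⋙ D} {wq : q ≫ ψl = q ≫ ψr} (hq : IsLimit (Fork.ofι q wq))
    (hδ : ∀ X, q.app X ≫ δ.app (F.obj X) ≫ D.map (ψl.app X) =
      q.app X ≫ δ.app (F.obj X) ≫ D.map (ψr.app X)) :
    ∃ d : M ⟶ M ⋙ D, (∀ X, d.app X ≫ D.map (q.app X) = q.app X ≫ δ.app (F.obj X)) ∧
      (∀ X, d.app X ≫ D.map (d.app X) = d.app X ≫ δ.app (M.obj X)) ∧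
      (∀ X, d.app X ≫ ε.app (M.obj X) = 𝟙 (M.obj X)) := by
  obtain ⟨(d : M ⟶ M ⋙ D), hd : d ≫ Functor.whiskerRight q D = q ≫ Functor.whiskerLeft F δ⟩ :=
    Fork.IsLimit.lift' (isLimitForkMapOfIsLimit ((Functor.whiskeringRight 𝒜 ℬ ℬ).obj D) wq hq)
      (q ≫ Functor.whiskerLeft F δ) (by ext X; simpa using hδ X)
  have hdX (X : 𝒜) : d.app X ≫ D.map (q.app X) = q.app X ≫ δ.app (F.obj X) :=
    NatTrans.congr_app hd X
  have (X : 𝒜) : Mono (q.app X) := Fork.IsLimit.mono (isLimitForkApp hq X)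
  have (X : 𝒜) : Mono (D.map (D.map (q.app X))) :=
    mono_map_of_isLimit_fork (D ⋙ D) (isLimitForkApp hq X)
  have hδq (X : 𝒜) : δ.app (M.obj X) ≫ D.map (D.map (q.app X)) =
      D.map (q.app X) ≫ δ.app (D.obj (F.obj X)) := (δ.naturality _).symm
  have hεq (X : 𝒜) : ε.app (M.obj X) ≫ q.app X = D.map (q.app X) ≫ ε.app (D.obj (F.obj X)) :=
    (ε.naturality _).symm
  refine ⟨d, hdX, fun X => ?_, fun X => ?_⟩
  · rw [← cancel_mono (D.map (D.map (q.app X))), Category.assoc, Category.assoc, ← D.map_comp,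
      hdX, D.map_comp, reassoc_of% (hdX X), hδq, reassoc_of% (hdX X), hcoassoc]
  · rw [← cancel_mono (q.app X), Category.assoc, hεq, reassoc_of% (hdX X), hcounit,
      Category.comp_id, Category.id_comp]

end Comodules

section PreTorsor

variable {A B : Type*} [Category A] [Category B] {P : A ⥤ B} {Q : B ⥤ A}
  {τ : Q ⟶ Q ⋙ P ⋙ Q} {Rf : A ⥤ A} {S : B ⥤ B} {r : 𝟭 A ⟶ Rf} {s : 𝟭 B ⟶ S}
  {w : P ⋙ Q ⟶ Rf} {z : Q ⋙ P ⟶ S} {ωl ωr : P ⋙ Q ⟶ Rf ⋙ P ⋙ Q}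
  {θl θr : Q ⋙ P ⟶ Q ⋙ P ⋙ S} {Cf : A ⥤ A} {i : Cf ⟶ P ⋙ Q} {δC : Cf ⟶ Cf ⋙ Cf}
  {Df : B ⥤ B} {j : Df ⟶ Q ⋙ P} {δD : Df ⟶ Df ⋙ Df}

theorem δC_comp_i_comp_map (hδC : ∀ X : A, δC.app X ≫ Cf.map (i.app X) ≫
      i.app (Q.obj (P.obj X)) = i.app X ≫ τ.app (P.obj X)) (X : A) :
    δC.app X ≫ i.app (Cf.obj X) ≫ Q.map (P.map (i.app X)) = i.app X ≫ τ.app (P.obj X) :=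
  comul_comp_app_comp_map (Δ := Functor.whiskerLeft P τ) hδC X

theorem δC_coassoc [HasEqualizers A] [PreservesLimitsOfShape WalkingParallelPair P]
    [PreservesLimitsOfShape WalkingParallelPair Q]
    (hτ : ∀ Y : B, τ.app Y ≫ Q.map (P.map (τ.app Y)) = τ.app Y ≫ τ.app (P.obj (Q.obj Y)))
    {wi : i ≫ ωl = i ≫ ωr} (hi : IsLimit (Fork.ofι i wi))
    (hδC : ∀ X : A, δC.app X ≫ Cf.map (i.app X) ≫ i.app (Q.obj (P.obj X)) =
      i.app X ≫ τ.app (P.obj X)) (X : A) :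
    δC.app X ≫ Cf.map (δC.app X) = δC.app X ≫ δC.app (Cf.obj X) :=
  coassoc_of_comul_restrict (Δ := Functor.whiskerLeft P τ) (fun X => hτ (P.obj X))
    (fun X => Fork.IsLimit.mono (isLimitForkApp hi X))
    (fun X => mono_map_of_isLimit_fork (P ⋙ Q) (isLimitForkApp hi X))
    (fun X => mono_map_of_isLimit_fork ((P ⋙ Q) ⋙ (P ⋙ Q)) (isLimitForkApp hi X)) hδC X

theorem δD_coassoc [HasEqualizers B] [PreservesLimitsOfShape WalkingParallelPair P]
    [PreservesLimitsOfShape WalkingParallelPair Q]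
    (hτ : ∀ Y : B, τ.app Y ≫ Q.map (P.map (τ.app Y)) = τ.app Y ≫ τ.app (P.obj (Q.obj Y)))
    {wj : j ≫ θl = j ≫ θr} (hj : IsLimit (Fork.ofι j wj))
    (hδD : ∀ Y : B, δD.app Y ≫ Df.map (j.app Y) ≫ j.app (P.obj (Q.obj Y)) =
      j.app Y ≫ P.map (τ.app Y)) (Y : B) :
    δD.app Y ≫ Df.map (δD.app Y) = δD.app Y ≫ δD.app (Df.obj Y) :=
  coassoc_of_comul_restrict (Δ := Functor.whiskerRight τ P)
    (fun Y => by simp only [Functor.whiskerRight_app, Functor.comp_map, Functor.comp_obj,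
      ← P.map_comp, hτ])
    (fun Y => Fork.IsLimit.mono (isLimitForkApp hj Y))
    (fun Y => mono_map_of_isLimit_fork (Q ⋙ P) (isLimitForkApp hj Y))
    (fun Y => mono_map_of_isLimit_fork ((Q ⋙ P) ⋙ (Q ⋙ P)) (isLimitForkApp hj Y)) hδD Y

theorem δC_comp_map_εC [HasEqualizers A] [PreservesLimitsOfShape WalkingParallelPair P]
    [PreservesLimitsOfShape WalkingParallelPair Q] {εC : Cf ⟶ 𝟭 A}
    (hωl : ∀ X : A, ωl.app X = τ.app (P.obj X) ≫ Q.map (P.map (w.app X)))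
    (hωr : ∀ X : A, ωr.app X = Q.map (P.map (r.app X)))
    (hδC : ∀ X : A, δC.app X ≫ Cf.map (i.app X) ≫ i.app (Q.obj (P.obj X)) =
      i.app X ≫ τ.app (P.obj X))
    (hεC : ∀ X : A, εC.app X ≫ r.app X = i.app X ≫ w.app X)
    {wi : i ≫ ωl = i ≫ ωr} (hi : IsLimit (Fork.ofι i wi))
    {wr : r ≫ Functor.whiskerLeft Rf r = r ≫ Functor.whiskerRight r Rf}
    (hr : IsLimit (Fork.ofι r wr)) (X : A) :
    δC.app X ≫ Cf.map (εC.app X) = 𝟙 (Cf.obj X) := by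
  have : Mono (i.app X) := Fork.IsLimit.mono (isLimitForkApp hi X)
  have : Mono (Q.map (P.map (r.app X))) := mono_map_of_isLimit_fork (P ⋙ Q) (isLimitForkApp hr X)
  have hiε : Cf.map (εC.app X) ≫ i.app X = i.app (Cf.obj X) ≫ Q.map (P.map (εC.app X)) :=
    i.naturality _
  rw [← cancel_mono (i.app X ≫ Q.map (P.map (r.app X))), Category.assoc, reassoc_of% hiε,
    ← Q.map_comp, ← P.map_comp, hεC, P.map_comp, Q.map_comp,
    reassoc_of% (δC_comp_i_comp_map hδC X), ← hωl, ← hωr, Category.id_comp]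
  exact NatTrans.congr_app wi X

theorem δD_comp_εD [HasEqualizers B] {εD : Df ⟶ 𝟭 B}
    (hθl : ∀ Y : B, θl.app Y = P.map (τ.app Y) ≫ z.app (P.obj (Q.obj Y)))
    (hθr : ∀ Y : B, θr.app Y = s.app (P.obj (Q.obj Y)))
    (hδD : ∀ Y : B, δD.app Y ≫ Df.map (j.app Y) ≫ j.app (P.obj (Q.obj Y)) =
      j.app Y ≫ P.map (τ.app Y))
    (hεD : ∀ Y : B, εD.app Y ≫ s.app Y = j.app Y ≫ z.app Y)
    {wj : j ≫ θl = j ≫ θr} (hj : IsLimit (Fork.ofι j wj))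
    {ws : s ≫ Functor.whiskerLeft S s = s ≫ Functor.whiskerRight s S}
    (hs : IsLimit (Fork.ofι s ws)) (Y : B) :
    δD.app Y ≫ εD.app (Df.obj Y) = 𝟙 (Df.obj Y) := by
  have : Mono (j.app Y) := Fork.IsLimit.mono (isLimitForkApp hj Y)
  have : Mono (s.app (P.obj (Q.obj Y))) := Fork.IsLimit.mono (isLimitForkApp hs _)
  have hεj : εD.app (Df.obj Y) ≫ j.app Y = Df.map (j.app Y) ≫ εD.app (P.obj (Q.obj Y)) :=
    (εD.naturality _).symm
  rw [← cancel_mono (j.app Y ≫ s.app (P.obj (Q.obj Y))), Category.assoc, reassoc_of% hεj, hεD,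
    reassoc_of% (hδD Y), ← hθl, ← hθr, Category.id_comp]
  exact NatTrans.congr_app wj Y

theorem map_τ_equalizes_θ
    (hτ : ∀ Y : B, τ.app Y ≫ Q.map (P.map (τ.app Y)) = τ.app Y ≫ τ.app (P.obj (Q.obj Y)))
    (hθl : ∀ Y : B, θl.app Y = P.map (τ.app Y) ≫ z.app (P.obj (Q.obj Y)))
    (hθr : ∀ Y : B, θr.app Y = s.app (P.obj (Q.obj Y)))
    {Y W : B} {m : W ⟶ P.obj (Q.obj Y)} (hm : m ≫ θl.app Y = m ≫ θr.app Y) :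
    m ≫ P.map (τ.app Y) ≫ θl.app (P.obj (Q.obj Y)) =
      m ≫ P.map (τ.app Y) ≫ θr.app (P.obj (Q.obj Y)) := by
  have hz : P.map (Q.map (P.map (τ.app Y))) ≫ z.app (P.obj (Q.obj (P.obj (Q.obj Y)))) =
      z.app (P.obj (Q.obj Y)) ≫ S.map (P.map (τ.app Y)) := z.naturality _
  have hs : P.map (τ.app Y) ≫ s.app (P.obj (Q.obj (P.obj (Q.obj Y)))) =
      s.app (P.obj (Q.obj Y)) ≫ S.map (P.map (τ.app Y)) := s.naturality _
  rw [hθl, hθr, ← P.map_comp_assoc, ← hτ, P.map_comp_assoc, hz, ← reassoc_of% (hθl Y),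
    reassoc_of% hm, hθr, hs]

theorem map_δC_equalizes_θ [HasEqualizers A] [PreservesLimitsOfShape WalkingParallelPair P]
    [PreservesLimitsOfShape WalkingParallelPair Q] [PreservesLimitsOfShape WalkingParallelPair S]
    (hτ : ∀ Y : B, τ.app Y ≫ Q.map (P.map (τ.app Y)) = τ.app Y ≫ τ.app (P.obj (Q.obj Y)))
    (hθl : ∀ Y : B, θl.app Y = P.map (τ.app Y) ≫ z.app (P.obj (Q.obj Y)))
    (hθr : ∀ Y : B, θr.app Y = s.app (P.obj (Q.obj Y)))
    (hδC : ∀ X : A, δC.app X ≫ Cf.map (i.app X) ≫ i.app (Q.obj (P.obj X)) =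
      i.app X ≫ τ.app (P.obj X))
    {wi : i ≫ ωl = i ≫ ωr} (hi : IsLimit (Fork.ofι i wi))
    {X : A} {W : B} {m : W ⟶ P.obj (Cf.obj X)}
    (hm : m ≫ P.map (i.app X) ≫ θl.app (P.obj X) = m ≫ P.map (i.app X) ≫ θr.app (P.obj X)) :
    m ≫ P.map (δC.app X) ≫ P.map (i.app (Cf.obj X)) ≫ θl.app (P.obj (Cf.obj X)) =
      m ≫ P.map (δC.app X) ≫ P.map (i.app (Cf.obj X)) ≫ θr.app (P.obj (Cf.obj X)) := by
  have key (θ : Q ⋙ P ⟶ Q ⋙ P ⋙ S) :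
      (m ≫ P.map (δC.app X) ≫ P.map (i.app (Cf.obj X)) ≫ θ.app (P.obj (Cf.obj X))) ≫
        S.map (P.map (Q.map (P.map (i.app X)))) =
      (m ≫ P.map (i.app X)) ≫ P.map (τ.app (P.obj X)) ≫ θ.app (P.obj (Q.obj (P.obj X))) := by
    have hθ : θ.app (P.obj (Cf.obj X)) ≫ S.map (P.map (Q.map (P.map (i.app X)))) =
        P.map (Q.map (P.map (i.app X))) ≫ θ.app (P.obj (Q.obj (P.obj X))) :=
      (θ.naturality _).symm
    simp only [Category.assoc, hθ, ← P.map_comp_assoc, δC_comp_i_comp_map hδC]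
  have : Mono (S.map (P.map (Q.map (P.map (i.app X))))) :=
    mono_map_of_isLimit_fork (P ⋙ Q ⋙ P ⋙ S) (isLimitForkApp hi X)
  rw [← cancel_mono (S.map (P.map (Q.map (P.map (i.app X))))), key, key,
    map_τ_equalizes_θ hτ hθl hθr (by simpa only [Category.assoc] using hm)]

theorem τ_comp_map_ωl
    (hτ : ∀ Y : B, τ.app Y ≫ Q.map (P.map (τ.app Y)) = τ.app Y ≫ τ.app (P.obj (Q.obj Y)))
    (hωl : ∀ X : A, ωl.app X = τ.app (P.obj X) ≫ Q.map (P.map (w.app X))) (X : A) :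
    τ.app (P.obj X) ≫ Q.map (P.map (ωl.app X)) = ωl.app X ≫ τ.app (P.obj (Rf.obj X)) := by
  have hτw : Q.map (P.map (w.app X)) ≫ τ.app (P.obj (Rf.obj X)) =
      τ.app (P.obj (Q.obj (P.obj X))) ≫ Q.map (P.map (Q.map (P.map (w.app X)))) :=
    τ.naturality _
  simp only [hωl, P.map_comp, Q.map_comp, Category.assoc]
  rw [reassoc_of% (hτ (P.obj X)), hτw]

theorem τ_comp_map_ωr (hωr : ∀ X : A, ωr.app X = Q.map (P.map (r.app X))) (X : A) :
    τ.app (P.obj X) ≫ Q.map (P.map (ωr.app X)) = ωr.app X ≫ τ.app (P.obj (Rf.obj X)) := by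
  rw [hωr]; exact (τ.naturality _).symm

theorem δD_map_equalizes_ω [HasEqualizers B]
    (hδD : ∀ Y : B, δD.app Y ≫ Df.map (j.app Y) ≫ j.app (P.obj (Q.obj Y)) =
      j.app Y ≫ P.map (τ.app Y))
    {Y Y' : B} {ωl ωr : Q.obj Y ⟶ Q.obj Y'}
    (hωl : τ.app Y ≫ Q.map (P.map ωl) = ωl ≫ τ.app Y')
    (hωr : τ.app Y ≫ Q.map (P.map ωr) = ωr ≫ τ.app Y')
    {wj : j ≫ θl = j ≫ θr} (hj : IsLimit (Fork.ofι j wj))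
    {W : B} {m : W ⟶ Df.obj Y} (hm : m ≫ j.app Y ≫ P.map ωl = m ≫ j.app Y ≫ P.map ωr) :
    m ≫ δD.app Y ≫ Df.map (j.app Y ≫ P.map ωl) = m ≫ δD.app Y ≫ Df.map (j.app Y ≫ P.map ωr) := by
  have key (ω : Q.obj Y ⟶ Q.obj Y') (hω : τ.app Y ≫ Q.map (P.map ω) = ω ≫ τ.app Y') :
      (m ≫ δD.app Y ≫ Df.map (j.app Y ≫ P.map ω)) ≫ j.app (P.obj (Q.obj Y')) =
        (m ≫ j.app Y ≫ P.map ω) ≫ P.map (τ.app Y') := by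
    have hjω : Df.map (P.map ω) ≫ j.app (P.obj (Q.obj Y')) =
        j.app (P.obj (Q.obj Y)) ≫ P.map (Q.map (P.map ω)) := j.naturality _
    simp only [Category.assoc, Df.map_comp, hjω, reassoc_of% (hδD Y), ← P.map_comp, hω]
  have : Mono (j.app (P.obj (Q.obj Y'))) := Fork.IsLimit.mono (isLimitForkApp hj _)
  rw [← cancel_mono (j.app (P.obj (Q.obj Y'))), key ωl hωl, key ωr hωr, hm]

theorem rightCoaction_comp_map_i
    (hδC : ∀ X : A, δC.app X ≫ Cf.map (i.app X) ≫ i.app (Q.obj (P.obj X)) =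
      i.app X ≫ τ.app (P.obj X))
    {M : A ⥤ B} {q : M ⟶ Cf ⋙ P} {c : M ⟶ Cf ⋙ M} {X : A}
    (hc : c.app X ≫ q.app (Cf.obj X) = q.app X ≫ P.map (δC.app X)) :
    c.app X ≫ (q.app (Cf.obj X) ≫ P.map (i.app (Cf.obj X))) ≫ P.map (Q.map (P.map (i.app X))) =
      (q.app X ≫ P.map (i.app X)) ≫ P.map (τ.app (P.obj X)) := by
  simp only [Category.assoc, reassoc_of% hc, ← P.map_comp, δC_comp_i_comp_map hδC]

theorem leftCoaction_comp_j_comp_map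
    (hδD : ∀ Y : B, δD.app Y ≫ Df.map (j.app Y) ≫ j.app (P.obj (Q.obj Y)) =
      j.app Y ≫ P.map (τ.app Y))
    {M : A ⥤ B} {q : M ⟶ P ⋙ Df} {d : M ⟶ M ⋙ Df} {X : A}
    (hd : d.app X ≫ Df.map (q.app X) = q.app X ≫ δD.app (P.obj X))
    {κ : M.obj X ⟶ P.obj (Q.obj (P.obj X))} (hκ : q.app X ≫ j.app (P.obj X) = κ) :
    d.app X ≫ j.app (M.obj X) ≫ P.map (Q.map κ) = κ ≫ P.map (τ.app (P.obj X)) := by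
  have hj : Df.map κ ≫ j.app (P.obj (Q.obj (P.obj X))) = j.app (M.obj X) ≫ P.map (Q.map κ) :=
    j.naturality _
  subst hκ
  rw [← hj, Df.map_comp, Category.assoc, reassoc_of% hd, Category.assoc, hδD]

theorem leftCoaction_comm_rightCoaction [HasEqualizers A] [HasEqualizers B]
    [PreservesLimitsOfShape WalkingParallelPair P] [PreservesLimitsOfShape WalkingParallelPair Q]
    (hτ : ∀ Y : B, τ.app Y ≫ Q.map (P.map (τ.app Y)) = τ.app Y ≫ τ.app (P.obj (Q.obj Y)))
    {wi : i ≫ ωl = i ≫ ωr} (hi : IsLimit (Fork.ofι i wi))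
    {wj : j ≫ θl = j ≫ θr} (hj : IsLimit (Fork.ofι j wj))
    {M T : A ⥤ B} {φl φr : Cf ⋙ P ⟶ T} {q : M ⟶ Cf ⋙ P} {wq : q ≫ φl = q ≫ φr}
    (hq : IsLimit (Fork.ofι q wq)) {κ : ∀ X, M.obj X ⟶ P.obj (Q.obj (P.obj X))}
    (hκ : ∀ X, κ X = q.app X ≫ P.map (i.app X)) {c : M ⟶ Cf ⋙ M} {d : M ⟶ M ⋙ Df} {X : A}
    (hc : c.app X ≫ κ (Cf.obj X) ≫ P.map (Q.map (P.map (i.app X))) =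
      κ X ≫ P.map (τ.app (P.obj X)))
    (hd : ∀ X, d.app X ≫ j.app (M.obj X) ≫ P.map (Q.map (κ X)) = κ X ≫ P.map (τ.app (P.obj X))) :
    d.app X ≫ Df.map (c.app X) = c.app X ≫ d.app (Cf.obj X) := by
  have : Mono (j.app (M.obj (Cf.obj X))) := Fork.IsLimit.mono (isLimitForkApp hj _)
  have : Mono (P.map (Q.map (κ (Cf.obj X)))) := by
    have : Mono (P.map (Q.map (q.app (Cf.obj X)))) :=
      mono_map_of_isLimit_fork (Q ⋙ P) (isLimitForkApp hq _)
    have : Mono (P.map (Q.map (P.map (i.app (Cf.obj X))))) :=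
      mono_map_of_isLimit_fork (P ⋙ Q ⋙ P) (isLimitForkApp hi _)
    rw [hκ, Functor.map_comp, Functor.map_comp]
    exact mono_comp _ _
  have : Mono (P.map (Q.map (P.map (Q.map (P.map (i.app X)))))) :=
    mono_map_of_isLimit_fork (P ⋙ Q ⋙ P ⋙ Q ⋙ P) (isLimitForkApp hi X)
  have hjc : Df.map (c.app X) ≫ j.app (M.obj (Cf.obj X)) =
      j.app (M.obj X) ≫ P.map (Q.map (c.app X)) := j.naturality _
  have hτi : P.map (τ.app (P.obj (Cf.obj X))) ≫ P.map (Q.map (P.map (Q.map (P.map (i.app X))))) =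
      P.map (Q.map (P.map (i.app X))) ≫ P.map (τ.app (P.obj (Q.obj (P.obj X)))) := by
    rw [← P.map_comp, ← P.map_comp]; exact congrArg P.map (τ.naturality _).symm
  rw [← cancel_mono (j.app (M.obj (Cf.obj X)) ≫ P.map (Q.map (κ (Cf.obj X))) ≫
    P.map (Q.map (P.map (Q.map (P.map (i.app X))))))]
  calc (d.app X ≫ Df.map (c.app X)) ≫ j.app (M.obj (Cf.obj X)) ≫ P.map (Q.map (κ (Cf.obj X))) ≫
        P.map (Q.map (P.map (Q.map (P.map (i.app X)))))
      _ = (d.app X ≫ j.app (M.obj X) ≫ P.map (Q.map (κ X))) ≫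
          P.map (Q.map (P.map (τ.app (P.obj X)))) := by
        simp only [Category.assoc, reassoc_of% hjc, ← P.map_comp, ← Q.map_comp, hc]
      _ = κ X ≫ P.map (τ.app (P.obj X)) ≫ P.map (τ.app (P.obj (Q.obj (P.obj X)))) := by
        rw [hd, Category.assoc, ← P.map_comp, hτ, P.map_comp]
      _ = (c.app X ≫ d.app (Cf.obj X)) ≫ j.app (M.obj (Cf.obj X)) ≫
          P.map (Q.map (κ (Cf.obj X))) ≫ P.map (Q.map (P.map (Q.map (P.map (i.app X))))) := by
        rw [Category.assoc, reassoc_of% (hd (Cf.obj X)), hτi, reassoc_of% hc]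

end PreTorsor

theorem stmt18_general {A B : Type*} [Category A] [Category B]
    [HasEqualizers A] [HasEqualizers B]
    (P : A ⥤ B) (Q : B ⥤ A) (Rf : A ⥤ A) (S : B ⥤ B)
    [PreservesLimitsOfShape WalkingParallelPair P]
    [PreservesLimitsOfShape WalkingParallelPair Q]
    [PreservesLimitsOfShape WalkingParallelPair S]
    (r : 𝟭 A ⟶ Rf) (s : 𝟭 B ⟶ S)
    (w : P ⋙ Q ⟶ Rf) (z : Q ⋙ P ⟶ S) (τ : Q ⟶ Q ⋙ P ⋙ Q)
    (wr : r ≫ (Functor.whiskerLeft Rf r : Rf ⟶ Rf ⋙ Rf) =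
      r ≫ (Functor.whiskerRight r Rf : Rf ⟶ Rf ⋙ Rf))
    (hr : IsLimit (Fork.ofι r wr))
    (ws : s ≫ (Functor.whiskerLeft S s : S ⟶ S ⋙ S) =
      s ≫ (Functor.whiskerRight s S : S ⟶ S ⋙ S))
    (hs : IsLimit (Fork.ofι s ws))
    (hτ : ∀ Y : B, τ.app Y ≫ Q.map (P.map (τ.app Y)) =
      τ.app Y ≫ τ.app (P.obj (Q.obj Y)))
    -- the comonad `C` on `A`
    (ωl ωr : P ⋙ Q ⟶ Rf ⋙ P ⋙ Q)
    (hωl : ∀ X : A, ωl.app X = τ.app (P.obj X) ≫ Q.map (P.map (w.app X)))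
    (hωr : ∀ X : A, ωr.app X = Q.map (P.map (r.app X)))
    (Cf : A ⥤ A) (i : Cf ⟶ P ⋙ Q) (wi : i ≫ ωl = i ≫ ωr)
    (hi : IsLimit (Fork.ofι i wi))
    (δC : Cf ⟶ Cf ⋙ Cf) (εC : Cf ⟶ 𝟭 A)
    (hδC : ∀ X : A, δC.app X ≫ Cf.map (i.app X) ≫ i.app (Q.obj (P.obj X)) =
      i.app X ≫ τ.app (P.obj X))
    (hεC : ∀ X : A, εC.app X ≫ r.app X = i.app X ≫ w.app X)
    -- the comonad `D` on `B`
    (θl θr : Q ⋙ P ⟶ Q ⋙ P ⋙ S)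
    (hθl : ∀ Y : B, θl.app Y = P.map (τ.app Y) ≫ z.app (P.obj (Q.obj Y)))
    (hθr : ∀ Y : B, θr.app Y = s.app (P.obj (Q.obj Y)))
    (Df : B ⥤ B) (j : Df ⟶ Q ⋙ P) (wj : j ≫ θl = j ≫ θr)
    (hj : IsLimit (Fork.ofι j wj))
    (δD : Df ⟶ Df ⋙ Df) (εD : Df ⟶ 𝟭 B)
    (hδD : ∀ Y : B, δD.app Y ≫ Df.map (j.app Y) ≫ j.app (P.obj (Q.obj Y)) =
      j.app Y ≫ P.map (τ.app Y))
    (hεD : ∀ Y : B, εD.app Y ≫ s.app Y = j.app Y ≫ z.app Y)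
    -- the equalizer `(Q̄, q)` of `(θ^l P)∘(Pi)` and `(θ^r P)∘(Pi)`
    (φl φr : Cf ⋙ P ⟶ P ⋙ Q ⋙ P ⋙ S)
    (hφl : ∀ X : A, φl.app X = P.map (i.app X) ≫ θl.app (P.obj X))
    (hφr : ∀ X : A, φr.app X = P.map (i.app X) ≫ θr.app (P.obj X))
    (Qb : A ⥤ B) (q : Qb ⟶ Cf ⋙ P) (wq : q ≫ φl = q ≫ φr)
    (hq : IsLimit (Fork.ofι q wq))
    -- the equalizer `(Q̄', q')` of `(Pω^l)∘(jP)` and `(Pω^r)∘(jP)`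
    (ψl ψr : P ⋙ Df ⟶ Rf ⋙ P ⋙ Q ⋙ P)
    (hψl : ∀ X : A, ψl.app X = j.app (P.obj X) ≫ P.map (ωl.app X))
    (hψr : ∀ X : A, ψr.app X = j.app (P.obj X) ≫ P.map (ωr.app X))
    (Qb' : A ⥤ B) (q' : Qb' ⟶ P ⋙ Df) (wq' : q' ≫ ψl = q' ≫ ψr)
    (hq' : IsLimit (Fork.ofι q' wq')) :
    -- `Q̄' ≅ Q̄`, compatibly with the two inclusions
    ∃ ν : Qb' ≅ Qb,
      (∀ X : A, ν.hom.app X ≫ q.app X ≫ P.map (i.app X) =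
        q'.app X ≫ j.app (P.obj X)) ∧
      -- the `C`- and `D`-coactions on `Q̄`
      ∃ (cbar : Qb ⟶ Cf ⋙ Qb) (dbar : Qb ⟶ Qb ⋙ Df),
        -- defining equation of the right `C`-coaction: `(qC)∘c̄ = (PΔ^C)∘q`
        (∀ X : A, cbar.app X ≫ q.app (Cf.obj X) = q.app X ≫ P.map (δC.app X)) ∧
        -- defining equation of the left `D`-coaction: `(Dq')∘d̄ = (Δ^D P)∘q'`
        (∀ X : A, dbar.app X ≫ Df.map (ν.inv.app X ≫ q'.app X) =
          ν.inv.app X ≫ q'.app X ≫ δD.app (P.obj X)) ∧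
        -- coassociativity and counitality of the `C`-coaction
        (∀ X : A, cbar.app X ≫ Qb.map (δC.app X) = cbar.app X ≫ cbar.app (Cf.obj X)) ∧
        (∀ X : A, cbar.app X ≫ Qb.map (εC.app X) = 𝟙 (Qb.obj X)) ∧
        -- coassociativity and counitality of the `D`-coaction
        (∀ X : A, dbar.app X ≫ Df.map (dbar.app X) = dbar.app X ≫ δD.app (Qb.obj X)) ∧
        (∀ X : A, dbar.app X ≫ εD.app (Qb.obj X) = 𝟙 (Qb.obj X)) ∧
        -- the two coactions commute
        (∀ X : A, dbar.app X ≫ Df.map (cbar.app X) = cbar.app X ≫ dbar.app (Cf.obj X)) := by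
  obtain ⟨rfl, rfl⟩ : φl = Functor.whiskerRight i P ≫ Functor.whiskerLeft P θl ∧
      φr = Functor.whiskerRight i P ≫ Functor.whiskerLeft P θr :=
    ⟨by ext X; exact hφl X, by ext X; exact hφr X⟩
  obtain ⟨rfl, rfl⟩ : ψl = Functor.whiskerLeft P j ≫ Functor.whiskerRight ωl P ∧
      ψr = Functor.whiskerLeft P j ≫ Functor.whiskerRight ωr P :=
    ⟨by ext X; exact hψl X, by ext X; exact hψr X⟩
  obtain ⟨ν, hν : ν.hom ≫ q ≫ Functor.whiskerRight i P = q' ≫ Functor.whiskerLeft P j⟩ :=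
    exists_iso_of_isLimit_iterated_forks
      (isLimitForkMapOfIsLimit ((Functor.whiskeringRight A A B).obj P) wi hi)
      (isLimitForkMapOfIsLimit ((Functor.whiskeringLeft A B B).obj P) wj hj) hq hq'
  have hνX (X : A) : ν.hom.app X ≫ q.app X ≫ P.map (i.app X) = q'.app X ≫ j.app (P.obj X) :=
    NatTrans.congr_app hν X
  have hκ (X : A) : (ν.symm.hom ≫ q').app X ≫ j.app (P.obj X) = q.app X ≫ P.map (i.app X) := by
    rw [NatTrans.comp_app, Category.assoc, ← hνX, Iso.symm_hom, Iso.inv_hom_id_app_assoc]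
  have := preservesEqualizers_of_isLimit_fork hj
  obtain ⟨cbar, hcq, hc_coassoc, hc_counit⟩ := exists_rightCoaction_of_isLimit
    (δC_coassoc hτ hi hδC) (δC_comp_map_εC hωl hωr hδC hεC hi hr) hq
    (fun X => map_δC_equalizes_θ hτ hθl hθr hδC hi (NatTrans.congr_app wq X))
  obtain ⟨dbar, hdq, hd_coassoc, hd_counit⟩ := exists_leftCoaction_of_isLimit
    (δD_coassoc hτ hj hδD) (δD_comp_εD hθl hθr hδD hεD hj hs) (isLimitForkIsoComp hq' ν.symm)
    (fun X => δD_map_equalizes_ω hδD (τ_comp_map_ωl hτ hωl X) (τ_comp_map_ωr hωr X) hj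
      (by simp only [NatTrans.comp_app, Category.assoc]; exact _ ≫= NatTrans.congr_app wq' X))
  refine ⟨ν, hνX, cbar, dbar, hcq, fun X => ?_, hc_coassoc, hc_counit, hd_coassoc, hd_counit,
    fun X => leftCoaction_comm_rightCoaction hτ hi hj hq (fun _ => rfl)
      (rightCoaction_comp_map_i hδC (hcq X))
      (fun X => leftCoaction_comp_j_comp_map hδD (hdq X) (hκ X))⟩
  simpa only [NatTrans.comp_app, Iso.symm_hom, Category.assoc] using hdq X

/-- In the pre-torsor setting, the functor `Q̄` (equalizer of `(θ^l P)∘(Pi)` and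
`(θ^r P)∘(Pi)`) is naturally isomorphic to `Q̄'` (equalizer of `(Pω^l)∘(jP)` and
`(Pω^r)∘(jP)`), compatibly with the inclusions, and `Q̄` carries a `D`-`C` bicomodule
structure with coactions determined by `(qC)∘c̄ = (PΔ^C)∘q` and `(Dq')∘d̄ = (Δ^D P)∘q'`. -/
theorem stmt18 {A B : Type*} [Category A] [Category B]
    [HasEqualizers A] [HasEqualizers B]
    (P : A ⥤ B) (Q : B ⥤ A) (Rf : A ⥤ A) (S : B ⥤ B)
    [PreservesLimitsOfShape WalkingParallelPair P]
    [PreservesLimitsOfShape WalkingParallelPair Q]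
    [PreservesLimitsOfShape WalkingParallelPair Rf]
    [PreservesLimitsOfShape WalkingParallelPair S]
    (r : 𝟭 A ⟶ Rf) (s : 𝟭 B ⟶ S)
    (w : P ⋙ Q ⟶ Rf) (z : Q ⋙ P ⟶ S) (τ : Q ⟶ Q ⋙ P ⋙ Q)
    (wr : r ≫ (Functor.whiskerLeft Rf r : Rf ⟶ Rf ⋙ Rf) =
      r ≫ (Functor.whiskerRight r Rf : Rf ⟶ Rf ⋙ Rf))
    (hr : IsLimit (Fork.ofι r wr))
    (ws : s ≫ (Functor.whiskerLeft S s : S ⟶ S ⋙ S) =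
      s ≫ (Functor.whiskerRight s S : S ⟶ S ⋙ S))
    (hs : IsLimit (Fork.ofι s ws))
    (hτ : ∀ Y : B, τ.app Y ≫ Q.map (P.map (τ.app Y)) =
      τ.app Y ≫ τ.app (P.obj (Q.obj Y)))
    (hz : ∀ Y : B, τ.app Y ≫ Q.map (z.app Y) = Q.map (s.app Y))
    (hw : ∀ Y : B, τ.app Y ≫ w.app (Q.obj Y) = r.app (Q.obj Y))
    -- the comonad `C` on `A`
    (ωl ωr : P ⋙ Q ⟶ Rf ⋙ P ⋙ Q)
    (hωl : ∀ X : A, ωl.app X = τ.app (P.obj X) ≫ Q.map (P.map (w.app X)))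
    (hωr : ∀ X : A, ωr.app X = Q.map (P.map (r.app X)))
    (Cf : A ⥤ A) (i : Cf ⟶ P ⋙ Q) (wi : i ≫ ωl = i ≫ ωr)
    (hi : IsLimit (Fork.ofι i wi))
    (δC : Cf ⟶ Cf ⋙ Cf) (εC : Cf ⟶ 𝟭 A)
    (hδC : ∀ X : A, δC.app X ≫ Cf.map (i.app X) ≫ i.app (Q.obj (P.obj X)) =
      i.app X ≫ τ.app (P.obj X))
    (hεC : ∀ X : A, εC.app X ≫ r.app X = i.app X ≫ w.app X)
    -- the comonad `D` on `B`
    (θl θr : Q ⋙ P ⟶ Q ⋙ P ⋙ S)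
    (hθl : ∀ Y : B, θl.app Y = P.map (τ.app Y) ≫ z.app (P.obj (Q.obj Y)))
    (hθr : ∀ Y : B, θr.app Y = s.app (P.obj (Q.obj Y)))
    (Df : B ⥤ B) (j : Df ⟶ Q ⋙ P) (wj : j ≫ θl = j ≫ θr)
    (hj : IsLimit (Fork.ofι j wj))
    (δD : Df ⟶ Df ⋙ Df) (εD : Df ⟶ 𝟭 B)
    (hδD : ∀ Y : B, δD.app Y ≫ Df.map (j.app Y) ≫ j.app (P.obj (Q.obj Y)) =
      j.app Y ≫ P.map (τ.app Y))
    (hεD : ∀ Y : B, εD.app Y ≫ s.app Y = j.app Y ≫ z.app Y)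
    -- the equalizer `(Q̄, q)` of `(θ^l P)∘(Pi)` and `(θ^r P)∘(Pi)`
    (φl φr : Cf ⋙ P ⟶ P ⋙ Q ⋙ P ⋙ S)
    (hφl : ∀ X : A, φl.app X = P.map (i.app X) ≫ θl.app (P.obj X))
    (hφr : ∀ X : A, φr.app X = P.map (i.app X) ≫ θr.app (P.obj X))
    (Qb : A ⥤ B) (q : Qb ⟶ Cf ⋙ P) (wq : q ≫ φl = q ≫ φr)
    (hq : IsLimit (Fork.ofι q wq))
    -- the equalizer `(Q̄', q')` of `(Pω^l)∘(jP)` and `(Pω^r)∘(jP)`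
    (ψl ψr : P ⋙ Df ⟶ Rf ⋙ P ⋙ Q ⋙ P)
    (hψl : ∀ X : A, ψl.app X = j.app (P.obj X) ≫ P.map (ωl.app X))
    (hψr : ∀ X : A, ψr.app X = j.app (P.obj X) ≫ P.map (ωr.app X))
    (Qb' : A ⥤ B) (q' : Qb' ⟶ P ⋙ Df) (wq' : q' ≫ ψl = q' ≫ ψr)
    (hq' : IsLimit (Fork.ofι q' wq')) :
    -- `Q̄' ≅ Q̄`, compatibly with the two inclusions
    ∃ ν : Qb' ≅ Qb,
      (∀ X : A, ν.hom.app X ≫ q.app X ≫ P.map (i.app X) =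
        q'.app X ≫ j.app (P.obj X)) ∧
      -- the `C`- and `D`-coactions on `Q̄`
      ∃ (cbar : Qb ⟶ Cf ⋙ Qb) (dbar : Qb ⟶ Qb ⋙ Df),
        -- defining equation of the right `C`-coaction: `(qC)∘c̄ = (PΔ^C)∘q`
        (∀ X : A, cbar.app X ≫ q.app (Cf.obj X) = q.app X ≫ P.map (δC.app X)) ∧
        -- defining equation of the left `D`-coaction: `(Dq')∘d̄ = (Δ^D P)∘q'`
        (∀ X : A, dbar.app X ≫ Df.map (ν.inv.app X ≫ q'.app X) =
          ν.inv.app X ≫ q'.app X ≫ δD.app (P.obj X)) ∧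
        -- coassociativity and counitality of the `C`-coaction
        (∀ X : A, cbar.app X ≫ Qb.map (δC.app X) = cbar.app X ≫ cbar.app (Cf.obj X)) ∧
        (∀ X : A, cbar.app X ≫ Qb.map (εC.app X) = 𝟙 (Qb.obj X)) ∧
        -- coassociativity and counitality of the `D`-coaction
        (∀ X : A, dbar.app X ≫ Df.map (dbar.app X) = dbar.app X ≫ δD.app (Qb.obj X)) ∧
        (∀ X : A, dbar.app X ≫ εD.app (Qb.obj X) = 𝟙 (Qb.obj X)) ∧
        -- the two coactions commute
        (∀ X : A, dbar.app X ≫ Df.map (cbar.app X) = cbar.app X ≫ dbar.app (Cf.obj X)) :=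
  stmt18_general P Q Rf S r s w z τ wr hr ws hs hτ ωl ωr hωl hωr Cf i wi hi δC εC hδC hεC θl θr hθl
    hθr Df j wj hj δD εD hδD hεD φl φr hφl hφr Qb q wq hq ψl ψr hψl hψr Qb' q' wq' hq'
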